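/- arXiv:1902.00784 — 2 statements merged into one kernel-verified Lean document; each statement's English description precedes it below -/
import Mathlib

section
/- For n ≥ 3, the regular n-gon in ℝ² with vertices v_i = √(sec(π/n)) (cos(2πi/n), sin(2πi/n)) for i = 1,…,n satisfies P = U P°, where P is the convex hull of the v_i and U is the rotation of ℝ² by angle π/n. -/
open Matrix Real

noncomputable section

/-- point at angle θ on the circle of radius √(sec(π/n)) -/
def Epnt (n : ℕ) (θ : ℝ) : Fin 2 → ℝ :=
  ![Real.sqrt ((Real.cos (π / n))⁻¹) * Real.cos θ,
    Real.sqrt ((Real.cos (π / n))⁻¹) * Real.sin θ]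

lemma cpos {n : ℕ} (hn : 3 ≤ n) : 0 < Real.cos (π / n) := by
  have hn' : (3:ℝ) ≤ n := by exact_mod_cast hn
  have hπ : 0 < π := Real.pi_pos
  apply Real.cos_pos_of_mem_Ioo
  constructor
  · have : (0:ℝ) < π / n := by positivity
    linarith
  · have h1 : π / n ≤ π / 3 := by gcongr
    have h2 : π / 3 < π / 2 := by
      apply div_lt_div_of_pos_left hπ (by norm_num) (by norm_num)
    linarith

lemma rsq {n : ℕ} (hn : 3 ≤ n) :
    Real.sqrt ((Real.cos (π / n))⁻¹) * Real.sqrt ((Real.cos (π / n))⁻¹)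
      = (Real.cos (π / n))⁻¹ :=
  Real.mul_self_sqrt (inv_nonneg.2 (cpos hn).le)

lemma rpos {n : ℕ} (hn : 3 ≤ n) : 0 < Real.sqrt ((Real.cos (π / n))⁻¹) :=
  Real.sqrt_pos.2 (inv_pos.2 (cpos hn))

lemma Edot {n : ℕ} (hn : 3 ≤ n) (α β : ℝ) :
    Epnt n α ⬝ᵥ Epnt n β = Real.cos (α - β) / Real.cos (π / n) := by
  have hc := cpos hn
  have hr := rsq hn
  simp only [Epnt, dotProduct, Fin.sum_univ_two, Matrix.cons_val_zero, Matrix.cons_val_one,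
    Matrix.head_cons]
  have key : Real.sqrt ((Real.cos (π / n))⁻¹) * Real.cos α *
      (Real.sqrt ((Real.cos (π / n))⁻¹) * Real.cos β) +
      Real.sqrt ((Real.cos (π / n))⁻¹) * Real.sin α *
      (Real.sqrt ((Real.cos (π / n))⁻¹) * Real.sin β)
      = (Real.sqrt ((Real.cos (π / n))⁻¹) * Real.sqrt ((Real.cos (π / n))⁻¹))
        * (Real.cos α * Real.cos β + Real.sin α * Real.sin β) := by
    ring
  rw [key, hr, Real.cos_sub, inv_mul_eq_div]

lemma Eper (n : ℕ) (θ : ℝ) (k : ℤ) : Epnt n (θ + k * (2 * π)) = Epnt n θ := by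
  simp [Epnt, Real.cos_add_int_mul_two_pi, Real.sin_add_int_mul_two_pi]

lemma Emem {n : ℕ} (hn : 3 ≤ n) (k : ℕ) :
    ∃ j : ℕ, j < n ∧ Epnt n (π * (2*k+1)/n) = Epnt n (π * (2*j+1)/n) := by
  refine ⟨k % n, Nat.mod_lt _ (by omega), ?_⟩
  have hn0 : (n:ℝ) ≠ 0 := by positivity
  have hk : (k:ℝ) = n * ((k/n : ℕ):ℝ) + ((k % n : ℕ):ℝ) := by
    exact_mod_cast (Nat.div_add_mod k n).symm
  have harg : π * (2*(k:ℝ)+1)/n = π * (2*((k % n : ℕ):ℝ)+1)/n + ((k/n : ℕ):ℤ) * (2*π) := by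
    rw [Int.cast_natCast, hk]; field_simp; ring
  rw [harg, Eper]

lemma sector {n : ℕ} (hn : 3 ≤ n) (φ : ℝ) :
    ∃ j : ℕ, j < n ∧ ∃ a b : ℝ, 0 ≤ a ∧ 0 ≤ b ∧
      ![Real.cos φ, Real.sin φ] =
        a • Epnt n (π * (2 * (j:ℝ) + 1) / n) + b • Epnt n (π * (2 * ((j:ℝ)+1) + 1) / n) := by
  have hπ := Real.pi_pos
  have hn0 : (0:ℝ) < n := by positivity
  have hn0' : (n:ℝ) ≠ 0 := hn0.ne'
  set r := Real.sqrt ((Real.cos (π / n))⁻¹) with hrdef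
  have hr := rpos hn
  set δ : ℝ := 2 * π / n with hδdef
  have hδ0 : 0 < δ := by positivity
  have hδπ : δ < π := by
    have h3 : (3:ℝ) ≤ n := by exact_mod_cast hn
    rw [hδdef, div_lt_iff₀ hn0]; nlinarith
  have hsδ : 0 < Real.sin δ := Real.sin_pos_of_pos_of_lt_pi hδ0 hδπ
  set m : ℤ := ⌊(φ - π / n) / δ⌋ with hmdef
  have h1 : (m:ℝ) * δ ≤ φ - π/n := (le_div_iff₀ hδ0).1 (Int.floor_le _)
  have h2 : φ - π/n < ((m:ℝ)+1) * δ := by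
    have := Int.lt_floor_add_one ((φ - π / n) / δ)
    rw [div_lt_iff₀ hδ0] at this; push_cast at this ⊢; linarith
  set β : ℝ := δ * m + π / n with hβdef
  set t : ℝ := φ - β with htdef
  have ht0 : 0 ≤ t := by rw [htdef, hβdef]; linarith
  have htδ : t < δ := by rw [htdef, hβdef]; linarith
  have hnZ : (0:ℤ) < (n:ℤ) := by exact_mod_cast (by omega : 0 < n)
  have hmdm : (n:ℤ) * (m / n) + m % n = m := Int.mul_ediv_add_emod m n
  have hj'0 : 0 ≤ m % (n:ℤ) := Int.emod_nonneg m hnZ.ne'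
  have hj'n : m % (n:ℤ) < n := Int.emod_lt_of_pos m hnZ
  refine ⟨(m % (n:ℤ)).toNat, by omega, ?_⟩
  have hjR : (((m % (n:ℤ)).toNat : ℕ) : ℝ) = ((m % (n:ℤ) : ℤ) : ℝ) := by
    exact_mod_cast congrArg Int.cast (Int.toNat_of_nonneg hj'0)
  have hmR : (m:ℝ) = (n:ℝ) * ((m / (n:ℤ) : ℤ):ℝ) + ((m % (n:ℤ) : ℤ):ℝ) := by
    exact_mod_cast hmdm.symm
  have hβ1 : β = π * (2 * (((m % (n:ℤ)).toNat : ℕ):ℝ) + 1) / n + ((m / (n:ℤ) : ℤ):ℝ) * (2*π) := by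
    rw [hβdef, hδdef, hjR, hmR]; field_simp; ring
  have hβ2 : β + δ = π * (2 * ((((m % (n:ℤ)).toNat : ℕ):ℝ)+1) + 1) / n
      + ((m / (n:ℤ) : ℤ):ℝ) * (2*π) := by
    rw [hβdef, hδdef, hjR, hmR]; field_simp; ring
  refine ⟨Real.sin (δ - t) / (r * Real.sin δ), Real.sin t / (r * Real.sin δ), ?_, ?_, ?_⟩
  · apply div_nonneg _ (by positivity)
    exact Real.sin_nonneg_of_nonneg_of_le_pi (by linarith) (by linarith)
  · apply div_nonneg _ (by positivity)
    exact Real.sin_nonneg_of_nonneg_of_le_pi ht0 (by linarith)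
  · have e1 : Epnt n (π * (2 * (((m % (n:ℤ)).toNat : ℕ):ℝ) + 1) / n) = Epnt n β := by
      rw [hβ1, Eper]
    have e2 : Epnt n (π * (2 * ((((m % (n:ℤ)).toNat : ℕ):ℝ)+1) + 1) / n) = Epnt n (β + δ) := by
      rw [hβ2, Eper]
    rw [e1, e2]
    have hφ : φ = β + t := by rw [htdef]; ring
    funext i
    fin_cases i <;>
      simp only [Epnt, Pi.add_apply, Pi.smul_apply, smul_eq_mul, ← hrdef,
        Matrix.cons_val_zero, Matrix.cons_val_one, Matrix.head_cons] <;>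
    · rw [hφ, Real.cos_add β t, Real.sin_add β t, Real.cos_add β δ, Real.sin_add β δ,
        Real.sin_sub δ t]
      simp only [Fin.zero_eta, Fin.mk_one, Matrix.cons_val_zero, Matrix.cons_val_one, Matrix.head_cons]
      have hr0 : r ≠ 0 := hr.ne'
      field_simp
      ring
lemma oddcos {n : ℕ} (hn : 3 ≤ n) (m : ℤ) (hm : Odd m) :
    Real.cos (π * m / n) ≤ Real.cos (π / n) := by
  have hπ := Real.pi_pos
  have hn0 : (0:ℝ) < n := by positivity
  have h3 : (3:ℝ) ≤ n := by exact_mod_cast hn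
  have hnZ : (0:ℤ) < 2*(n:ℤ) := by positivity
  have hdm : (2*(n:ℤ)) * (m / (2*n)) + m % (2*n) = m := Int.mul_ediv_add_emod m (2*n)
  have h0 : 0 ≤ m % (2*(n:ℤ)) := Int.emod_nonneg m hnZ.ne'
  have h2 : m % (2*(n:ℤ)) < 2*n := Int.emod_lt_of_pos m hnZ
  have hodd2 : m % (2*(n:ℤ)) % 2 = m % 2 := Int.emod_emod_of_dvd m ⟨(n:ℤ), by ring⟩
  have hm2 : m % 2 = 1 := Int.odd_iff.1 hm
  have h1 : 1 ≤ m % (2*(n:ℤ)) := by omega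
  have hodd : m % (2*(n:ℤ)) ≠ (n:ℤ) ∨ True := Or.inr trivial
  set m' : ℤ := m % (2*(n:ℤ)) with hm'def
  have hmR : (m:ℝ) = 2*(n:ℝ)*((m / (2*(n:ℤ)) : ℤ):ℝ) + (m':ℝ) := by exact_mod_cast hdm.symm
  have hcos : Real.cos (π*m/n) = Real.cos (π*m'/n) := by
    have harg : π*(m:ℝ)/n = π*(m':ℝ)/n + ((m / (2*(n:ℤ)) : ℤ):ℝ) * (2*π) := by
      rw [hmR]; field_simp; ring
    rw [harg]
    exact_mod_cast Real.cos_add_int_mul_two_pi (π*(m':ℝ)/n) (m / (2*(n:ℤ)))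
  rw [hcos]
  have h1R : (1:ℝ) ≤ (m':ℝ) := by exact_mod_cast h1
  rcases le_or_gt m' n with hc | hc
  · have hcR : (m':ℝ) ≤ n := by exact_mod_cast hc
    apply Real.cos_le_cos_of_nonneg_of_le_pi (by positivity)
    · rw [div_le_iff₀ hn0]; nlinarith
    · rw [div_le_div_iff₀ hn0 hn0]
      nlinarith [mul_nonneg (mul_nonneg hπ.le hn0.le) (sub_nonneg.2 h1R)]
  · rw [← Real.cos_two_pi_sub]
    have hcR : (n:ℝ) < (m':ℝ) := by exact_mod_cast hc
    have h2R : (m':ℝ) < 2*n := by exact_mod_cast h2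
    have harg : 2*π - π*(m':ℝ)/n = π*(2*(n:ℝ) - m')/n := by field_simp
    rw [harg]
    apply Real.cos_le_cos_of_nonneg_of_le_pi (by positivity)
    · rw [div_le_iff₀ hn0]; nlinarith
    · rw [div_le_div_iff₀ hn0 hn0]
      have h2R' : (m':ℝ) ≤ 2*(n:ℝ) - 1 := by
        have : m' ≤ 2*(n:ℤ) - 1 := by omega
        exact_mod_cast this
      nlinarith [mul_nonneg (mul_nonneg hπ.le hn0.le) (by linarith : (0:ℝ) ≤ 2*(n:ℝ) - 1 - m')]

lemma sumzero_aux {n : ℕ} (hn : 3 ≤ n) :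
    ∑ i ∈ Finset.range n, Complex.exp (((π*(2*(i:ℝ)+1)/n : ℝ) : ℂ) * Complex.I) = 0 := by
  have hπ := Real.pi_pos
  have hn0 : (n:ℝ) ≠ 0 := by positivity
  have hnC : (n:ℂ) ≠ 0 := Nat.cast_ne_zero.2 (by omega)
  set ω : ℂ := Complex.exp (((2*π/n : ℝ) : ℂ) * Complex.I) with hω
  have hterm : ∀ i : ℕ, Complex.exp (((π*(2*(i:ℝ)+1)/n : ℝ) : ℂ) * Complex.I)
      = Complex.exp (((π/n : ℝ) : ℂ) * Complex.I) * ω ^ i := by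
    intro i
    rw [hω, ← Complex.exp_nat_mul, ← Complex.exp_add]
    congr 1
    push_cast
    field_simp
    ring
  have hω1 : ω ≠ 1 := by
    rw [hω]
    intro h
    rw [Complex.exp_eq_one_iff] at h
    obtain ⟨k, hk⟩ := h
    have him := congrArg Complex.im hk
    simp [Complex.mul_I_im] at him
    -- him : 2*π/n = k*(2*π)  (in some form)
    have h3 : (3:ℝ) ≤ n := by exact_mod_cast hn
    rcases le_or_gt (k:ℝ) 0 with hk0 | hk0
    · have : 0 < 2*π/(n:ℝ) := by positivity
      nlinarith
    · have hk1 : (1:ℝ) ≤ k := by exact_mod_cast (by exact_mod_cast hk0 : (0:ℤ) < k)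
      have hnR : (0:ℝ) < n := by linarith
      have heq : 2*π = (k:ℝ)*(2*π)*n := by
        field_simp at him
        linear_combination (2*π) * him
      have hkn : (3:ℝ) ≤ (k:ℝ)*n := by nlinarith
      nlinarith
  have hωn : ω ^ n = 1 := by
    rw [hω, ← Complex.exp_nat_mul]
    have : (n:ℂ) * (((2*π/n : ℝ) : ℂ) * Complex.I) = 2*π*Complex.I := by
      push_cast; field_simp
    rw [this, Complex.exp_two_pi_mul_I]
  simp_rw [hterm]
  rw [← Finset.mul_sum, geom_sum_eq hω1, hωn]
  simp

lemma sumzero {n : ℕ} (hn : 3 ≤ n) :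
    ∑ i : Fin n, Epnt n (π * (2 * ((i:ℕ):ℝ) + 1) / n) = 0 := by
  have key := sumzero_aux hn
  have hre : ∑ i ∈ Finset.range n, Real.cos (π*(2*(i:ℝ)+1)/n) = 0 := by
    have h := congrArg Complex.re key
    rw [Complex.re_sum] at h
    simp only [Complex.exp_ofReal_mul_I_re] at h
    exact h
  have him : ∑ i ∈ Finset.range n, Real.sin (π*(2*(i:ℝ)+1)/n) = 0 := by
    have h := congrArg Complex.im key
    rw [Complex.im_sum] at h
    simp only [Complex.exp_ofReal_mul_I_im] at h
    exact h
  funext k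
  rw [Finset.sum_apply]
  fin_cases k
  · simp only [Epnt, Fin.zero_eta, Fin.isValue, Matrix.cons_val_zero, Pi.zero_apply]
    rw [← Finset.mul_sum,
      Fin.sum_univ_eq_sum_range (fun i : ℕ => Real.cos (π*(2*(i:ℝ)+1)/n)), hre, mul_zero]
  · simp only [Epnt, Fin.mk_one, Fin.isValue, Matrix.cons_val_one, Matrix.head_cons, Matrix.cons_val_zero, Pi.zero_apply]
    rw [← Finset.mul_sum,
      Fin.sum_univ_eq_sum_range (fun i : ℕ => Real.sin (π*(2*(i:ℝ)+1)/n)), him, mul_zero]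

/-- The polar of a set `P ⊆ ℝ²`. -/
def polar (A : Set (Fin 2 → ℝ)) : Set (Fin 2 → ℝ) :=
  {x | ∀ a ∈ A, x ⬝ᵥ a ≤ 1}

theorem regular_ngon_selfPolar (n : ℕ) (hn : 3 ≤ n)
    (v : Fin n → (Fin 2 → ℝ))
    (hv : ∀ i : Fin n,
      v i = ![Real.sqrt ((Real.cos (π / n))⁻¹) * Real.cos (2 * π * ((i : ℕ) + 1) / n),
              Real.sqrt ((Real.cos (π / n))⁻¹) * Real.sin (2 * π * ((i : ℕ) + 1) / n)])
    (P : Set (Fin 2 → ℝ)) (hP : P = convexHull ℝ (Set.range v))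
    (U : Matrix (Fin 2) (Fin 2) ℝ)
    (hU : U = !![Real.cos (π / n), -Real.sin (π / n);
                 Real.sin (π / n),  Real.cos (π / n)]) :
    P = U.mulVec '' polar P := by
  have hπ := Real.pi_pos
  have hn0 : (0:ℝ) < n := by positivity
  have hc := cpos hn
  set u : Fin n → (Fin 2 → ℝ) := fun i => Epnt n (π * (2 * ((i:ℕ):ℝ) + 1) / n) with hu
  have hvE : ∀ i : Fin n, v i = Epnt n (π * (2 * ((i:ℕ):ℝ) + 2) / n) := by
    intro i
    rw [hv i]
    have harg : 2 * π * (((i:ℕ):ℝ) + 1) / n = π * (2 * ((i:ℕ):ℝ) + 2) / n := by ring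
    rw [harg]; rfl
  have hdotlin1 : ∀ w : Fin 2 → ℝ, IsLinearMap ℝ (fun x : Fin 2 → ℝ => x ⬝ᵥ w) :=
    fun w => ⟨fun a b => add_dotProduct a b w, fun c a => smul_dotProduct c a w⟩
  have hdotlin2 : ∀ x : Fin 2 → ℝ, IsLinearMap ℝ (fun a : Fin 2 → ℝ => x ⬝ᵥ a) :=
    fun x => ⟨fun a b => dotProduct_add x a b, fun c a => dotProduct_smul c x a⟩
  -- vertices of u are in every halfspace of v
  have huv : ∀ (j i : Fin n), u j ⬝ᵥ v i ≤ 1 := by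
    intro j i
    rw [hvE i]
    show Epnt n (π * (2 * ((j:ℕ):ℝ) + 1) / n) ⬝ᵥ _ ≤ 1
    rw [Edot hn]
    have harg : π * (2 * ((j:ℕ):ℝ) + 1) / n - π * (2 * ((i:ℕ):ℝ) + 2) / n
        = π * ((2*((j:ℕ):ℤ) - 2*((i:ℕ):ℤ) - 1 : ℤ):ℝ) / n := by
      push_cast; field_simp; ring
    rw [harg, div_le_one hc]
    exact oddcos hn _ ⟨((j:ℕ):ℤ) - ((i:ℕ):ℤ) - 1, by ring⟩
  -- easy inclusion
  have easy : convexHull ℝ (Set.range u) ⊆ polar P := by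
    intro x hx a ha
    rw [hP] at ha
    have hstep : ∀ i : Fin n, x ⬝ᵥ v i ≤ 1 := by
      intro i
      exact convexHull_min (by rintro y ⟨j, rfl⟩; exact huv j i)
        (convex_halfSpace_le (hdotlin1 (v i)) 1) hx
    exact convexHull_min (by rintro b ⟨i, rfl⟩; exact hstep i)
      (convex_halfSpace_le (hdotlin2 x) 1) ha
  -- zero is in the hull
  have h0mem : (0 : Fin 2 → ℝ) ∈ convexHull ℝ (Set.range u) := by
    have hcm := Finset.centerMass_mem_convexHull (Finset.univ : Finset (Fin n))
      (w := fun _ : Fin n => (1:ℝ)) (fun i _ => zero_le_one)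
      (by simp; positivity) (z := u) (fun i _ => Set.mem_range_self i)
    have h0 : Finset.centerMass Finset.univ (fun _ : Fin n => (1:ℝ)) u = 0 := by
      rw [Finset.centerMass]
      simp only [one_smul, Finset.sum_const, smul_eq_mul, mul_one]
      rw [hu]
      rw [sumzero hn, smul_zero]
    rwa [h0] at hcm
  -- hard inclusion
  have hard : polar P ⊆ convexHull ℝ (Set.range u) := by
    intro x hx
    have hxv : ∀ i : Fin n, x ⬝ᵥ v i ≤ 1 := fun i =>
      hx (v i) (hP ▸ subset_convexHull ℝ _ (Set.mem_range_self i))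
    by_cases hx0 : x = 0
    · rw [hx0]; exact h0mem
    · set z : ℂ := ⟨x 0, x 1⟩ with hz
      have hz0 : z ≠ 0 := by
        intro h
        apply hx0
        have h0 : x 0 = 0 := congrArg Complex.re h
        have h1 : x 1 = 0 := congrArg Complex.im h
        funext i; fin_cases i <;> assumption
      have hρ : 0 < ‖z‖ := norm_pos_iff.2 hz0
      obtain ⟨j, hj, a, b, ha, hb, hsec⟩ := sector hn z.arg
      have hxρ : x = ‖z‖ • ![Real.cos z.arg, Real.sin z.arg] := by
        funext i
        fin_cases i <;>
          simp only [Pi.smul_apply, smul_eq_mul, Fin.zero_eta, Fin.mk_one, Fin.isValue,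
            Matrix.cons_val_zero, Matrix.cons_val_one, Matrix.head_cons]
        · exact (Complex.norm_mul_cos_arg z).symm
        · exact (Complex.norm_mul_sin_arg z).symm
      set A := ‖z‖ * a with hA
      set B := ‖z‖ * b with hB
      have hA0 : 0 ≤ A := mul_nonneg hρ.le ha
      have hB0 : 0 ≤ B := mul_nonneg hρ.le hb
      have hxAB : x = A • Epnt n (π * (2 * (j:ℝ) + 1) / n)
          + B • Epnt n (π * (2 * ((j:ℝ)+1) + 1) / n) := by
        rw [hxρ, hsec, smul_add, smul_smul, smul_smul]
      have hvj : v ⟨j, hj⟩ = Epnt n (π * (2 * (j:ℝ) + 2) / n) := by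
        rw [hvE ⟨j, hj⟩]
      have hAB : A + B ≤ 1 := by
        have h1 := hxv ⟨j, hj⟩
        rw [hvj, hxAB, add_dotProduct, smul_dotProduct, smul_dotProduct,
          Edot hn, Edot hn] at h1
        have e1 : π * (2 * (j:ℝ) + 1) / n - π * (2 * (j:ℝ) + 2) / n = -(π/n) := by
          field_simp; ring
        have e2 : π * (2 * ((j:ℝ)+1) + 1) / n - π * (2 * (j:ℝ) + 2) / n = π/n := by
          field_simp; ring
        rw [e1, e2, Real.cos_neg, div_self hc.ne'] at h1
        simpa using h1
      have hp1 : Epnt n (π * (2 * (j:ℝ) + 1) / n) ∈ Set.range u := ⟨⟨j, hj⟩, rfl⟩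
      have hp2 : Epnt n (π * (2 * ((j:ℝ)+1) + 1) / n) ∈ Set.range u := by
        obtain ⟨j1, hj1, he1⟩ := Emem hn (j+1)
        refine ⟨⟨j1, hj1⟩, ?_⟩
        show Epnt n (π * (2 * ((j1:ℕ):ℝ) + 1) / n) = _
        rw [← he1]
        congr 1
        push_cast
        ring
      have hC := convex_convexHull ℝ (Set.range u)
      rcases eq_or_lt_of_le (add_nonneg hA0 hB0) with h | h
      · have hA' : A = 0 := by linarith
        have hB' : B = 0 := by linarith
        rw [hxAB, hA', hB', zero_smul, zero_smul, add_zero]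
        exact h0mem
      · set s := A + B with hs
        have hy : (A/s) • Epnt n (π * (2 * (j:ℝ) + 1) / n)
            + (B/s) • Epnt n (π * (2 * ((j:ℝ)+1) + 1) / n) ∈ convexHull ℝ (Set.range u) :=
          hC (subset_convexHull ℝ _ hp1) (subset_convexHull ℝ _ hp2)
            (div_nonneg hA0 h.le) (div_nonneg hB0 h.le) (by field_simp; exact hs.symm)
        have hxs : x = s • ((A/s) • Epnt n (π * (2 * (j:ℝ) + 1) / n)
            + (B/s) • Epnt n (π * (2 * ((j:ℝ)+1) + 1) / n)) + (1 - s) • 0 := by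
          rw [smul_zero, add_zero, smul_add, smul_smul, smul_smul,
            mul_div_cancel₀ _ h.ne', mul_div_cancel₀ _ h.ne']
          exact hxAB
        rw [hxs]
        exact hC hy h0mem h.le (by linarith) (by ring)
  have hPolar : polar P = convexHull ℝ (Set.range u) := Set.Subset.antisymm hard easy
  -- rotation maps u to v
  have hUE : ∀ θ : ℝ, U.mulVec (Epnt n θ) = Epnt n (θ + π/n) := by
    intro θ
    funext k
    fin_cases k <;>
      simp only [hU, Matrix.mulVec, dotProduct, Fin.sum_univ_two, Epnt, Fin.zero_eta, Fin.mk_one,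
        Fin.isValue, Matrix.cons_val_zero, Matrix.cons_val_one, Matrix.head_cons,
        Matrix.cons_val', Matrix.empty_val', Matrix.cons_val_fin_one, Matrix.head_fin_const,
        Real.cos_add, Real.sin_add, Matrix.of_apply] <;> ring
  have hUu : U.mulVec ∘ u = v := by
    funext i
    show U.mulVec (Epnt n (π * (2 * ((i:ℕ):ℝ) + 1) / n)) = v i
    rw [hUE, hvE i]
    congr 1
    field_simp
    ring
  rw [hPolar]
  have himg : U.mulVec '' convexHull ℝ (Set.range u)
      = convexHull ℝ (U.mulVec '' Set.range u) := by
    have h := (Matrix.mulVecLin U).image_convexHull (Set.range u)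
    simpa only [Matrix.coe_mulVecLin] using h
  rw [himg, ← Set.range_comp, hUu, ← hP]

end
end

section
/- For every odd n ≥ 3, there exists a convex polygon P ⊆ ℝ² with n vertices such that P = −P°; namely, the regular n-gon with vertices at distance √(sec(π/n)) from the origin satisfies this when n is odd. -/
open Matrix Real Pointwise

noncomputable section

namespace OddPolar

variable (n : ℕ)

def θ (k : ℤ) : ℝ := 2 * π * k / n

def rr : ℝ := Real.sqrt ((Real.cos (π / n))⁻¹)

def vv (k : ℤ) : Fin 2 → ℝ := ![rr n * Real.cos (θ n k), rr n * Real.sin (θ n k)]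

def V (n : ℕ) : Finset (Fin 2 → ℝ) := Finset.image (fun k : Fin n => vv n k) Finset.univ

variable {n}
lemma pi_n_pos (hn : 3 ≤ n) : 0 < π / n := by
  apply div_pos Real.pi_pos; exact_mod_cast Nat.lt_of_lt_of_le (by norm_num) hn

lemma pi_n_lt (hn : 3 ≤ n) : π / n < π / 2 := by
  have h3 : (3:ℝ) ≤ n := by exact_mod_cast hn
  rw [div_lt_div_iff₀ (by positivity) (by norm_num)]
  nlinarith [Real.pi_pos]

lemma cos_pi_n_pos (hn : 3 ≤ n) : 0 < Real.cos (π / n) :=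
  Real.cos_pos_of_mem_Ioo ⟨by linarith [pi_n_pos hn, Real.pi_pos], pi_n_lt hn⟩

lemma rr_pos (hn : 3 ≤ n) : 0 < rr n := Real.sqrt_pos.2 (inv_pos.2 (cos_pi_n_pos hn))

lemma rr_sq (hn : 3 ≤ n) : rr n ^ 2 = (Real.cos (π / n))⁻¹ :=
  Real.sq_sqrt (le_of_lt (inv_pos.2 (cos_pi_n_pos hn)))

lemma theta_sub (k j : ℤ) : θ n k - θ n j = θ n (k - j) := by
  simp only [θ]; push_cast; ring

lemma dot_vv (k j : ℤ) : vv n k ⬝ᵥ vv n j = rr n ^ 2 * Real.cos (θ n (k - j)) := by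
  simp only [vv, dotProduct, Fin.sum_univ_two, Matrix.cons_val_zero, Matrix.cons_val_one,
    Matrix.head_cons]
  rw [← theta_sub, Real.cos_sub]; ring

lemma theta_add_n (hn : 3 ≤ n) (k : ℤ) : θ n (k + n) = θ n k + 2 * π := by
  have h : (n:ℝ) ≠ 0 := by exact_mod_cast (by omega : n ≠ 0)
  simp only [θ]; push_cast; field_simp

lemma vv_add_n (hn : 3 ≤ n) (k : ℤ) : vv n (k + n) = vv n k := by
  simp only [vv, theta_add_n hn, Real.cos_add_two_pi, Real.sin_add_two_pi]
lemma npos (hn : 3 ≤ n) : (0:ℝ) < n := by exact_mod_cast by omega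
lemma nne (hn : 3 ≤ n) : (n:ℝ) ≠ 0 := ne_of_gt (npos hn)

lemma theta_int_shift (hn : 3 ≤ n) (k m : ℤ) : θ n (k + m * n) = θ n k + m * (2 * π) := by
  have := nne hn
  simp only [θ]; push_cast; field_simp

lemma vv_int_shift (hn : 3 ≤ n) (k m : ℤ) : vv n (k + m * n) = vv n k := by
  simp only [vv, theta_int_shift hn, Real.cos_add_int_mul_two_pi, Real.sin_add_int_mul_two_pi]

lemma vv_emod (hn : 3 ≤ n) (k : ℤ) : vv n (k % n) = vv n k := by
  conv_rhs => rw [← Int.emod_add_mul_ediv k n]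
  rw [show k % (n:ℤ) + (n:ℤ) * (k / n) = k % n + (k / n) * n from by ring, vv_int_shift hn]

lemma exp_theta (k : ℤ) : Complex.exp (θ n k * Complex.I) =
    Complex.exp (2 * π * Complex.I / n) ^ k := by
  rw [← Complex.exp_int_mul]
  congr 1
  simp only [θ]; push_cast; ring

lemma vv_inj (hn : 3 ≤ n) : Function.Injective (fun k : Fin n => vv n k) := by
  intro k j h
  simp only [vv] at h
  have hr := rr_pos hn
  have h0 := congrFun h 0
  have h1 := congrFun h 1
  simp only [Matrix.cons_val_zero, Matrix.cons_val_one, Matrix.head_cons] at h0 h1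
  have hc : Real.cos (θ n k) = Real.cos (θ n j) := mul_left_cancel₀ (ne_of_gt hr) h0
  have hs : Real.sin (θ n k) = Real.sin (θ n j) := mul_left_cancel₀ (ne_of_gt hr) h1
  have hexp : Complex.exp (θ n (k:ℤ) * Complex.I) = Complex.exp (θ n (j:ℤ) * Complex.I) := by
    apply Complex.ext <;>
      simp [Complex.exp_ofReal_mul_I_re, Complex.exp_ofReal_mul_I_im, hc, hs]
  rw [exp_theta, exp_theta] at hexp
  have hprim := Complex.isPrimitiveRoot_exp n (by omega)
  simp only [zpow_natCast] at hexp
  exact Fin.ext (hprim.pow_inj k.2 j.2 hexp)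
lemma cos_theta_emod (hn : 3 ≤ n) (k : ℤ) : Real.cos (θ n k) = Real.cos (θ n (k % n)) := by
  conv_lhs => rw [← Int.emod_add_mul_ediv k n,
    show k % (n:ℤ) + (n:ℤ) * (k / n) = k % n + (k / n) * n from by ring, theta_int_shift hn]
  rw [Real.cos_add_int_mul_two_pi]

lemma theta_cast (m : ℤ) : θ n m = 2 * π * (m:ℝ) / n := rfl

lemma theta_mul_n (hn : 3 ≤ n) (m : ℤ) : θ n m * n = 2 * π * (m:ℝ) := by
  rw [theta_cast, div_mul_cancel₀ _ (nne hn)]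

lemma pi_div_mul_n (hn : 3 ≤ n) : (π / n) * n = π := div_mul_cancel₀ _ (nne hn)

lemma theta_nonneg (hn : 3 ≤ n) {m : ℤ} (hm : 0 ≤ m) : 0 ≤ θ n m := by
  have := npos hn
  have : (0:ℝ) ≤ m := by exact_mod_cast hm
  unfold θ; positivity

lemma emod_bounds (hn : 3 ≤ n) (m : ℤ) : 0 ≤ m % n ∧ m % n < n :=
  ⟨Int.emod_nonneg m (by exact_mod_cast (by omega : (n:ℤ) ≠ 0)),
   Int.emod_lt_of_pos m (by exact_mod_cast (by omega : (0:ℤ) < n))⟩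

lemma cos_ge (hn : 3 ≤ n) (hodd : Odd n) (m : ℤ) : -Real.cos (π / n) ≤ Real.cos (θ n m) := by
  have hnR := npos hn
  have hπ := Real.pi_pos
  rw [cos_theta_emod hn]
  set m' := m % n with hm'
  obtain ⟨h0, h1⟩ := emod_bounds hn m
  have h0R : (0:ℝ) ≤ m' := by exact_mod_cast h0
  have h1R : (m':ℝ) ≤ (n:ℝ) - 1 := by exact_mod_cast (by omega : m' ≤ (n:ℤ) - 1)
  obtain ⟨t, ht⟩ := hodd
  have hθm := theta_mul_n hn m'
  have hπn := pi_div_mul_n hn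
  have key : ∀ x : ℝ, 0 ≤ x → x ≤ π - π / n → -Real.cos (π/n) ≤ Real.cos x := by
    intro x hx0 hx1
    rw [← Real.cos_pi_sub]
    exact Real.cos_le_cos_of_nonneg_of_le_pi hx0 (by linarith [pi_n_pos hn]) hx1
  rcases (by omega : 2 * m' ≤ (n:ℤ) - 1 ∨ (n:ℤ) + 1 ≤ 2 * m') with hc | hc
  · have hcR : 2 * (m':ℝ) ≤ (n:ℝ) - 1 := by exact_mod_cast hc
    exact key _ (theta_nonneg hn h0) (by nlinarith)
  · have hcR : (n:ℝ) + 1 ≤ 2 * (m':ℝ) := by exact_mod_cast hc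
    have := key (2 * π - θ n m') (by nlinarith) (by nlinarith)
    rwa [Real.cos_two_pi_sub] at this

lemma cos_le (hn : 3 ≤ n) {m : ℤ} (hm : m % n ≠ 0) :
    Real.cos (θ n m) ≤ Real.cos (θ n 1) := by
  have hnR := npos hn
  have hπ := Real.pi_pos
  rw [cos_theta_emod hn]
  set m' := m % n with hm'
  obtain ⟨h0, h1⟩ := emod_bounds hn m
  have h0R : (1:ℝ) ≤ m' := by exact_mod_cast (by omega : 1 ≤ m')
  have h1R : (m':ℝ) ≤ (n:ℝ) - 1 := by exact_mod_cast (by omega : m' ≤ (n:ℤ) - 1)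
  have hθm := theta_mul_n hn m'
  have hθ1 := theta_mul_n hn 1
  push_cast at hθ1
  have hθ1pos : 0 ≤ θ n 1 := theta_nonneg hn (by norm_num)
  rcases le_or_gt (θ n m') π with hc | hc
  · exact Real.cos_le_cos_of_nonneg_of_le_pi hθ1pos hc (by nlinarith)
  · have h := Real.cos_le_cos_of_nonneg_of_le_pi hθ1pos
      (show 2 * π - θ n m' ≤ π from by nlinarith)
      (show θ n 1 ≤ 2 * π - θ n m' from by nlinarith)
    rwa [Real.cos_two_pi_sub] at h

lemma cos_theta_one_lt_one (hn : 3 ≤ n) : Real.cos (θ n 1) < 1 := by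
  have hnR := npos hn
  have hπ := Real.pi_pos
  have hθ1 := theta_mul_n hn 1
  push_cast at hθ1
  have h3 : (3:ℝ) ≤ n := by exact_mod_cast hn
  have h1 : 0 < θ n 1 := by rw [theta_cast]; positivity
  have h2 : θ n 1 ≤ π := by nlinarith
  calc Real.cos (θ n 1) < Real.cos 0 :=
        Real.cos_lt_cos_of_nonneg_of_le_pi le_rfl h2 h1
  _ = 1 := Real.cos_zero
lemma card_V (hn : 3 ≤ n) : (V n).card = n := by
  rw [V, Finset.card_image_of_injective _ (vv_inj hn), Finset.card_univ, Fintype.card_fin]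

lemma vv_mem_V (hn : 3 ≤ n) (k : ℤ) : vv n k ∈ V n := by
  obtain ⟨h0, h1⟩ := emod_bounds hn k
  rw [← vv_emod hn k]
  have hlt : (k % n).toNat < n := by omega
  have : (k % (n:ℤ)) = ((⟨(k % n).toNat, hlt⟩ : Fin n) : ℤ) := by simp; omega
  rw [this, V]
  exact Finset.mem_image_of_mem _ (Finset.mem_univ _)

lemma mem_V_iff (hn : 3 ≤ n) (x : Fin 2 → ℝ) : x ∈ V n ↔ ∃ k : Fin n, vv n k = x := by
  simp [V, Finset.mem_image]

lemma sum_exp (hn : 3 ≤ n) :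
    ∑ k ∈ Finset.range n, Complex.exp (θ n k * Complex.I) = 0 := by
  have hprim := Complex.isPrimitiveRoot_exp n (by omega)
  have := hprim.geom_sum_eq_zero (by omega)
  rw [← this]
  apply Finset.sum_congr rfl
  intro k _
  rw [exp_theta, zpow_natCast]

lemma sum_cos (hn : 3 ≤ n) : ∑ k ∈ Finset.range n, Real.cos (θ n k) = 0 := by
  have := congrArg Complex.re (sum_exp hn)
  rw [Complex.re_sum] at this
  simpa [Complex.exp_ofReal_mul_I_re] using this

lemma sum_sin (hn : 3 ≤ n) : ∑ k ∈ Finset.range n, Real.sin (θ n k) = 0 := by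
  have := congrArg Complex.im (sum_exp hn)
  rw [Complex.im_sum] at this
  simpa [Complex.exp_ofReal_mul_I_im] using this

lemma sum_vv (hn : 3 ≤ n) : ∑ k ∈ Finset.range n, vv n k = 0 := by
  funext i
  simp only [Finset.sum_apply, Pi.zero_apply]
  fin_cases i
  · show ∑ c ∈ Finset.range n, rr n * Real.cos (θ n c) = 0
    rw [← Finset.mul_sum, sum_cos hn, mul_zero]
  · show ∑ c ∈ Finset.range n, rr n * Real.sin (θ n c) = 0
    rw [← Finset.mul_sum, sum_sin hn, mul_zero]

lemma zero_mem_hull (hn : 3 ≤ n) : (0 : Fin 2 → ℝ) ∈ convexHull ℝ (V n : Set (Fin 2 → ℝ)) := by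
  have h := Finset.centerMass_mem_convexHull (Finset.range n)
    (w := fun _ => (1:ℝ)) (z := fun k : ℕ => vv n k) (s := (V n : Set (Fin 2 → ℝ)))
    (by intro i _; norm_num) (by simp; positivity)
    (fun i _ => by exact_mod_cast vv_mem_V hn i)
  simpa [Finset.centerMass, sum_vv hn] using h
lemma sin_theta_one_pos (hn : 3 ≤ n) : 0 < Real.sin (θ n 1) := by
  have hnR := npos hn
  have hπ := Real.pi_pos
  have h3 : (3:ℝ) ≤ n := by exact_mod_cast hn
  have hθ1 := theta_mul_n hn 1
  push_cast at hθ1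
  apply Real.sin_pos_of_pos_of_lt_pi
  · rw [theta_cast]; positivity
  · nlinarith

lemma sector_mem (hn : 3 ≤ n) (hodd : Odd n) (x : Fin 2 → ℝ)
    (hx : ∀ k : ℤ, -1 ≤ x ⬝ᵥ vv n k) : x ∈ convexHull ℝ (V n : Set (Fin 2 → ℝ)) := by
  have hnR := npos hn
  have hπ := Real.pi_pos
  have hrpos := rr_pos hn
  have hspos := sin_theta_one_pos hn
  have hcpos := cos_pi_n_pos hn
  obtain ⟨t, ht⟩ := hodd
  set z : ℂ := ⟨x 0, x 1⟩ with hz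
  set ρ : ℝ := ‖z‖ with hρ
  set φ : ℝ := z.arg with hφ
  have hρ0 : 0 ≤ ρ := norm_nonneg z
  have hx0 : x 0 = ρ * Real.cos φ := (Complex.norm_mul_cos_arg z).symm
  have hx1 : x 1 = ρ * Real.sin φ := (Complex.norm_mul_sin_arg z).symm
  set k : ℤ := ⌊φ * n / (2 * π)⌋ with hk
  -- sector bounds
  have hsec1 : θ n k ≤ φ := by
    have h := Int.floor_le (φ * n / (2 * π))
    rw [le_div_iff₀ (by positivity : (0:ℝ) < 2*π), ← hk] at h
    rw [theta_cast, div_le_iff₀ hnR]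
    linarith
  have hsec2 : φ ≤ θ n (k + 1) := by
    have h := (Int.lt_floor_add_one (φ * n / (2 * π))).le
    rw [div_le_iff₀ (by positivity : (0:ℝ) < 2*π), ← hk] at h
    rw [theta_cast, le_div_iff₀ hnR]
    push_cast
    push_cast at h
    linarith
  have hθk1 : θ n (k + 1) = θ n k + θ n 1 := by
    rw [theta_cast, theta_cast, theta_cast]; push_cast; field_simp
  set s : ℝ := Real.sin (θ n 1) with hs
  set a : ℝ := ρ * Real.sin (θ n (k+1) - φ) / (rr n * s) with ha
  set b : ℝ := ρ * Real.sin (φ - θ n k) / (rr n * s) with hb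
  have hθ1pos : 0 < θ n 1 := by rw [theta_cast]; positivity
  have hθ1pi : θ n 1 ≤ π := by
    have hθ1 := theta_mul_n hn 1
    push_cast at hθ1
    have h3 : (3:ℝ) ≤ n := by exact_mod_cast hn
    nlinarith
  have hann : 0 ≤ a := by
    apply div_nonneg _ (by positivity)
    apply mul_nonneg hρ0
    apply Real.sin_nonneg_of_nonneg_of_le_pi (by linarith) (by linarith [hθk1 ▸ hsec2])
  have hbnn : 0 ≤ b := by
    apply div_nonneg _ (by positivity)
    apply mul_nonneg hρ0
    apply Real.sin_nonneg_of_nonneg_of_le_pi (by linarith)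
      (by rw [hθk1] at hsec2; linarith)
  -- the convex combination equals x
  have key1 : ∀ A B C : ℝ, Real.sin (B - C) * Real.cos A + Real.sin (C - A) * Real.cos B
      = Real.sin (B - A) * Real.cos C := by
    intros A B C
    rw [Real.sin_sub, Real.sin_sub, Real.sin_sub]
    ring
  have key2 : ∀ A B C : ℝ, Real.sin (B - C) * Real.sin A + Real.sin (C - A) * Real.sin B
      = Real.sin (B - A) * Real.sin C := by
    intros A B C
    rw [Real.sin_sub, Real.sin_sub, Real.sin_sub]
    ring
  have hsne : s ≠ 0 := ne_of_gt hspos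
  have hrne : rr n ≠ 0 := ne_of_gt hrpos
  have hBA : θ n (k+1) - θ n k = θ n 1 := by rw [hθk1]; ring
  have hxeq : x = a • vv n k + b • vv n (k+1) := by
    funext i
    fin_cases i
    · show x 0 = a * (rr n * Real.cos (θ n k)) + b * (rr n * Real.cos (θ n (k+1)))
      rw [hx0, ha, hb]
      field_simp
      have := key1 (θ n k) (θ n (k+1)) φ
      rw [hBA, ← hs] at this
      linear_combination (-ρ) * this
    · show x 1 = a * (rr n * Real.sin (θ n k)) + b * (rr n * Real.sin (θ n (k+1)))
      rw [hx1, ha, hb]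
      field_simp
      have := key2 (θ n k) (θ n (k+1)) φ
      rw [hBA, ← hs] at this
      linear_combination (-ρ) * this
  -- a + b ≤ 1
  have hj : θ n (k + (t+1)) = θ n k + π + π / n := by
    rw [theta_cast, theta_cast]
    push_cast
    rw [ht]
    push_cast
    field_simp
    ring
  have hcon := hx (k + (t+1))
  have hdot : x ⬝ᵥ vv n (k + (t+1)) = -(ρ * rr n * Real.cos (φ - θ n k - π/n)) := by
    simp only [vv, dotProduct, Fin.sum_univ_two, Matrix.cons_val_zero, Matrix.cons_val_one,
      Matrix.head_cons]
    rw [hx0, hx1, hj]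
    have : φ - (θ n k + π + π/n) = (φ - θ n k - π/n) - π := by ring
    have hcs : Real.cos φ * Real.cos (θ n k + π + π / n)
        + Real.sin φ * Real.sin (θ n k + π + π / n)
        = Real.cos (φ - (θ n k + π + π/n)) := (Real.cos_sub _ _).symm
    rw [this, Real.cos_sub_pi] at hcs
    linear_combination (ρ * rr n) * hcs
  have hρrc : ρ * rr n * Real.cos (φ - θ n k - π/n) ≤ 1 := by
    rw [hdot] at hcon; linarith
  have hsum2 : Real.sin (θ n (k+1) - φ) + Real.sin (φ - θ n k)
      = 2 * Real.sin (π/n) * Real.cos (φ - θ n k - π/n) := by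
    have h1 : θ n (k+1) - φ = π/n - (φ - θ n k - π/n) := by
      rw [hθk1]
      have : θ n 1 = 2 * (π/n) := by rw [theta_cast]; push_cast; field_simp
      rw [this]; ring
    have h2 : φ - θ n k = (φ - θ n k - π/n) + π/n := by ring
    rw [h1, h2, Real.sin_sub, Real.sin_add]
    ring
  have hs2 : s = 2 * Real.sin (π/n) * Real.cos (π/n) := by
    have : θ n 1 = 2 * (π/n) := by rw [theta_cast]; push_cast; field_simp
    rw [hs, this, Real.sin_two_mul]
  have hrc : rr n ^ 2 * Real.cos (π/n) = 1 := by
    rw [rr_sq hn]; field_simp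
  have hab : a + b = ρ * rr n * Real.cos (φ - θ n k - π/n) := by
    rw [ha, hb, ← add_div, ← mul_add, hsum2, hs2]
    have hsp : (0:ℝ) < Real.sin (π/n) :=
      Real.sin_pos_of_pos_of_lt_pi (pi_n_pos hn) (by linarith [pi_n_lt hn])
    rw [div_eq_iff (ne_of_gt (mul_pos hrpos (by nlinarith : (0:ℝ) < 2 * Real.sin (π/n) * Real.cos (π/n))))]
    linear_combination (-(2 * ρ * Real.sin (π/n) * Real.cos (φ - θ n k - π/n))) * hrc
  have hable : a + b ≤ 1 := by rw [hab]; exact hρrc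
  -- assemble
  have hconv := convex_convexHull ℝ (V n : Set (Fin 2 → ℝ))
  have hmem := hconv.sum_mem (t := (Finset.univ : Finset (Fin 3)))
    (w := ![a, b, 1 - a - b]) (z := ![vv n k, vv n (k+1), 0])
    (by intro i _; fin_cases i
        · exact hann
        · exact hbnn
        · show (0:ℝ) ≤ 1 - a - b; linarith)
    (by rw [Fin.sum_univ_three]; show a + b + (1 - a - b) = 1; ring)
    (by intro i _; fin_cases i
        · exact subset_convexHull ℝ _ (Finset.mem_coe.mpr (vv_mem_V hn k))
        · exact subset_convexHull ℝ _ (Finset.mem_coe.mpr (vv_mem_V hn (k+1)))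
        · exact zero_mem_hull hn)
  rw [Fin.sum_univ_three] at hmem
  have hsimp : (![a, b, 1 - a - b] : Fin 3 → ℝ) 0 • (![vv n k, vv n (k+1), 0] : Fin 3 → (Fin 2 → ℝ)) 0
      + ![a, b, 1 - a - b] 1 • (![vv n k, vv n (k+1), 0] : Fin 3 → (Fin 2 → ℝ)) 1
      + ![a, b, 1 - a - b] 2 • (![vv n k, vv n (k+1), 0] : Fin 3 → (Fin 2 → ℝ)) 2
      = a • vv n k + b • vv n (k+1) := by
    simp [Matrix.cons_val_zero, Matrix.cons_val_one, Matrix.head_cons]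
  rw [hsimp] at hmem
  rwa [hxeq]lemma lin1 (y : Fin 2 → ℝ) : IsLinearMap ℝ (fun a : Fin 2 → ℝ => a ⬝ᵥ y) :=
  ⟨fun a b => add_dotProduct a b y, fun c a => smul_dotProduct c a y⟩

lemma lin2 (y : Fin 2 → ℝ) : IsLinearMap ℝ (fun a : Fin 2 → ℝ => y ⬝ᵥ a) :=
  ⟨fun a b => dotProduct_add y a b, fun c a => dotProduct_smul c y a⟩

lemma rc_one (hn : 3 ≤ n) : rr n ^ 2 * Real.cos (π/n) = 1 := by
  rw [rr_sq hn]; exact inv_mul_cancel₀ (ne_of_gt (cos_pi_n_pos hn))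

lemma hull_dot_ge (hn : 3 ≤ n) (hodd : Odd n) {x : Fin 2 → ℝ}
    (hx : x ∈ convexHull ℝ (V n : Set (Fin 2 → ℝ))) (k : ℤ) : -1 ≤ x ⬝ᵥ vv n k := by
  have h := convexHull_min (s := (V n : Set (Fin 2 → ℝ)))
    (t := {y : Fin 2 → ℝ | -1 ≤ y ⬝ᵥ vv n k}) ?_ (convex_halfSpace_ge (lin1 (vv n k)) (-1))
  · exact h hx
  · intro u hu
    obtain ⟨j, hj⟩ := (mem_V_iff hn u).1 (Finset.mem_coe.mp hu)
    rw [← hj]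
    show -1 ≤ vv n j ⬝ᵥ vv n k
    rw [dot_vv]
    have h1 := cos_ge hn hodd ((j:ℤ) - k)
    have h2 := rc_one hn
    have h3 := rr_pos hn
    nlinarith

lemma theta_zero : θ n 0 = 0 := by rw [theta_cast]; norm_num

lemma dot_self (hn : 3 ≤ n) (k : ℤ) : vv n k ⬝ᵥ vv n k = (Real.cos (π / n))⁻¹ := by
  rw [dot_vv, sub_self, theta_zero, Real.cos_zero, mul_one, rr_sq hn]

lemma extreme (hn : 3 ≤ n) {w : Fin 2 → ℝ} (hw : w ∈ V n) :
    w ∉ convexHull ℝ ((V n : Set (Fin 2 → ℝ)) \ {w}) := by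
  obtain ⟨j, hj⟩ := (mem_V_iff hn w).1 hw
  intro hmem
  have hsub : ((V n : Set (Fin 2 → ℝ)) \ {w}) ⊆ {y | y ⬝ᵥ w ≤ rr n ^ 2 * Real.cos (θ n 1)} := by
    rintro u ⟨huV, hune⟩
    obtain ⟨i, hi⟩ := (mem_V_iff hn u).1 (Finset.mem_coe.mp huV)
    have hij : i ≠ j := by
      rintro rfl
      exact hune (by rw [← hi, hj]; rfl)
    have hvalne : (i : ℕ) ≠ (j : ℕ) := fun h => hij (Fin.ext h)
    show u ⬝ᵥ w ≤ _
    rw [← hi, ← hj, dot_vv]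
    have hmod : ((i:ℤ) - (j:ℤ)) % (n:ℤ) ≠ 0 := by
      have hi2 := i.2; have hj2 := j.2
      have hne : ((i:ℕ):ℤ) ≠ ((j:ℕ):ℤ) := by exact_mod_cast hvalne
      intro h0
      have hd : (n:ℤ) ∣ ((i:ℤ) - (j:ℤ)) := Int.dvd_of_emod_eq_zero h0
      have := Int.eq_zero_of_abs_lt_dvd hd (by rw [abs_lt]; omega)
      omega
    have hle := cos_le hn hmod
    nlinarith [rr_pos hn]
  have hw2 := convexHull_min hsub (convex_halfSpace_le (lin1 w) _) hmem
  have hself : w ⬝ᵥ w = rr n ^ 2 := by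
    rw [← hj, dot_vv, sub_self, theta_zero, Real.cos_zero, mul_one]
  rw [Set.mem_setOf_eq, hself] at hw2
  nlinarith [mul_pos (pow_pos (rr_pos hn) 2) (sub_pos.2 (cos_theta_one_lt_one hn))]

lemma hull_eq (hn : 3 ≤ n) (hodd : Odd n) :
    convexHull ℝ (V n : Set (Fin 2 → ℝ)) = -polar (convexHull ℝ (V n : Set (Fin 2 → ℝ))) := by
  ext x
  rw [Set.mem_neg]
  constructor
  · intro hx
    intro a ha
    have hhalf : Convex ℝ {a : Fin 2 → ℝ | -x ⬝ᵥ a ≤ 1} := convex_halfSpace_le (lin2 (-x)) 1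
    have hsub : (V n : Set (Fin 2 → ℝ)) ⊆ {a : Fin 2 → ℝ | -x ⬝ᵥ a ≤ 1} := by
      intro u hu
      obtain ⟨j, hj⟩ := (mem_V_iff hn u).1 (Finset.mem_coe.mp hu)
      show -x ⬝ᵥ u ≤ 1
      rw [← hj, neg_dotProduct]
      linarith [hull_dot_ge hn hodd hx (j:ℤ)]
    exact convexHull_min hsub hhalf ha
  · intro hx
    apply sector_mem hn hodd
    intro k
    have h := hx (vv n k) (subset_convexHull ℝ _ (Finset.mem_coe.mpr (vv_mem_V hn k)))
    rw [neg_dotProduct] at h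
    linarith

end OddPolar

theorem odd_polygon_negSelfPolar (n : ℕ) (hn : 3 ≤ n) (hodd : Odd n) :
    ∃ V : Finset (Fin 2 → ℝ), V.card = n ∧
      (∀ w ∈ V, w ∉ convexHull ℝ ((V : Set (Fin 2 → ℝ)) \ {w})) ∧
      (∀ w ∈ V, w ⬝ᵥ w = (Real.cos (π / n))⁻¹) ∧
      convexHull ℝ (V : Set (Fin 2 → ℝ)) = -polar (convexHull ℝ (V : Set (Fin 2 → ℝ))) := by
  refine ⟨OddPolar.V n, OddPolar.card_V hn, ?_, ?_, OddPolar.hull_eq hn hodd⟩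
  · intro w hw
    exact OddPolar.extreme hn hw
  · intro w hw
    obtain ⟨j, hj⟩ := (OddPolar.mem_V_iff hn w).1 hw
    rw [← hj]
    exact OddPolar.dot_self hn j
end
end
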